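/- For s-t graphs H and G, the vertex set V(H) ⊆ V(H ⊘ G) forms an isometric copy of H: for all u, v ∈ V(H), d_{H⊘G}(u, v) = d_H(u, v). -/

import Mathlib

open scoped ENNReal

/-- Cost of a chain (list of vertices): sum of the length function over consecutive pairs. -/
noncomputable def chainCost {α : Type} (len : α → α → ℝ≥0∞) : List α → ℝ≥0∞
  | a :: b :: l => len a b + chainCost len (b :: l)
  | _ => 0
  termination_by l => l.length

/-- A finite weighted multigraph with two distinguished vertices `s` and `t`.
Edge lengths take values in `ℝ≥0∞`. -/
structure STGraph where
  V : Type
  E : Type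
  finV : Fintype V
  finE : Fintype E
  ends : E → V × V
  elen : E → ℝ≥0∞
  s : V
  t : V

attribute [instance] STGraph.finV STGraph.finE

namespace STGraph

/-- The length between two vertices: the infimum of lengths of edges joining them
(`⊤` if there is no such edge). -/
noncomputable def lenFn (G : STGraph) (u v : G.V) : ℝ≥0∞ :=
  ⨅ e : {e : G.E // G.ends e = (u, v) ∨ G.ends e = (v, u)}, G.elen e.1

/-- The shortest-path (extended) distance between two vertices. -/
noncomputable def edist (G : STGraph) (u v : G.V) : ℝ≥0∞ :=
  ⨅ l : {l : List G.V // l.head? = some u ∧ l.getLast? = some v}, chainCost G.lenFn l.1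

/-- `len G` is the distance between the two distinguished vertices. -/
noncomputable def len (G : STGraph) : ℝ≥0∞ := G.edist G.s G.t

/-- An `s`-`t` graph is *proper* if all edge lengths are positive and finite, there are no
self-loops, the graph is connected, and `s ≠ t`. -/
def Proper (G : STGraph) : Prop :=
  (∀ e, 0 < G.elen e ∧ G.elen e < ⊤) ∧
  (∀ e, (G.ends e).1 ≠ (G.ends e).2) ∧
  (∀ u v, G.edist u v ≠ ⊤) ∧ G.s ≠ G.t

/-- The inner (non-terminal) vertices of an `s`-`t` graph. -/
abbrev Inner (G : STGraph) : Type := {v : G.V // v ≠ G.s ∧ v ≠ G.t}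

noncomputable instance (G : STGraph) : Fintype G.Inner := Fintype.ofFinite _

/-- Where a vertex `w` of `G` lands in `H ⊘ G` when the copy of `G` is glued along edge `e` of
`H`: `s(G)` and `t(G)` are identified with the endpoints of `e`. -/
noncomputable def endMap (H G : STGraph) (e : H.E) (w : G.V) : H.V ⊕ (H.E × G.Inner) := by
  classical
  exact if h : w = G.s then Sum.inl (H.ends e).1
    else if h' : w = G.t then Sum.inl (H.ends e).2
    else Sum.inr (e, ⟨w, h, h'⟩)

/-- The composition `H ⊘ G`: every edge of `H` is replaced by a copy of `G`, with lengths in the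
copy along `e` scaled by `len_H(e)/len(G)`. -/
noncomputable def oslash (H G : STGraph) : STGraph where
  V := H.V ⊕ (H.E × G.Inner)
  E := H.E × G.E
  finV := inferInstance
  finE := inferInstance
  ends := fun p => (endMap H G p.1 (G.ends p.2).1, endMap H G p.1 (G.ends p.2).2)
  elen := fun p => H.elen p.1 * G.elen p.2 / G.len
  s := Sum.inl H.s
  t := Sum.inl H.t

/-- A single edge of unit length. -/
noncomputable def unitEdge : STGraph where
  V := Bool
  E := Unit
  finV := inferInstance
  finE := inferInstance
  ends := fun _ => (false, true)
  elen := fun _ => 1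
  s := false
  t := true

/-- Recursive composition: `G^{⊘0}` is a single unit-length edge and
`G^{⊘k} = G^{⊘(k-1)} ⊘ G`. -/
noncomputable def iterOslash (G : STGraph) : ℕ → STGraph
  | 0 => unitEdge
  | k + 1 => oslash (iterOslash G k) G

end STGraph

/-! The inclusion `V(H) → V(H ⊘ G)` does not increase distances: the copy of `G` glued along an
edge `e` of `H` has `s`-`t` distance `len(G) · len_H(e) / len(G) = len_H(e)`. Conversely,
`d_H(u, ·)` extends to the vertices of `H ⊘ G` (at a vertex of the copy along `e`, take the
better of leaving that copy through `s(G)` or through `t(G)`) so that along every edge it changes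
by at most the edge length; such a function changes by at most the path metric, which gives
`d_H ≤ d_{H⊘G}`. -/

section ChainCost

variable {α : Type}

lemma chainCost_cons_cons (len : α → α → ℝ≥0∞) (a b : α) (l : List α) :
    chainCost len (a :: b :: l) = len a b + chainCost len (b :: l) := by
  rw [chainCost]

lemma chainCost_singleton (len : α → α → ℝ≥0∞) (a : α) : chainCost len [a] = 0 := by
  rw [chainCost]; simp

lemma le_add_mul_chainCost (len : α → α → ℝ≥0∞) (f : α → ℝ≥0∞) (c : ℝ≥0∞)
    (hf : ∀ a b, f b ≤ f a + c * len a b) :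
    ∀ (l : List α) (x y : α), l.head? = some x → l.getLast? = some y →
      f y ≤ f x + c * chainCost len l
  | [], _, _, hx, _ => by simp at hx
  | [a], x, y, hx, hy => by
    obtain rfl : a = x := Option.some.inj hx
    obtain rfl : a = y := Option.some.inj hy
    exact le_self_add
  | a :: b :: l, x, y, hx, hy => by
    obtain rfl : a = x := Option.some.inj hx
    rw [List.getLast?_cons_cons] at hy
    calc f y ≤ f b + c * chainCost len (b :: l) := le_add_mul_chainCost len f c hf _ b y rfl hy
      _ ≤ f a + c * len a b + c * chainCost len (b :: l) := by gcongr; exact hf a b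
      _ = f a + c * chainCost len (a :: b :: l) := by
        rw [chainCost_cons_cons, mul_add, add_assoc]

end ChainCost

namespace STGraph

section Distance

variable (G : STGraph)

lemma edist_le_chainCost {u v : G.V} (l : List G.V) (hu : l.head? = some u)
    (hv : l.getLast? = some v) : G.edist u v ≤ chainCost G.lenFn l :=
  iInf_le (fun l : {l : List G.V // l.head? = some u ∧ l.getLast? = some v} ↦
    chainCost G.lenFn l.1) ⟨l, hu, hv⟩

@[simp]
lemma edist_self (u : G.V) : G.edist u u = 0 :=
  nonpos_iff_eq_zero.mp <| (G.edist_le_chainCost [u] rfl rfl).trans_eq (chainCost_singleton _ u)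

lemma edist_le_lenFn_add (a b w : G.V) : G.edist a w ≤ G.lenFn a b + G.edist b w := by
  conv_rhs => rw [edist, ENNReal.add_iInf]
  refine le_iInf fun ⟨l, hb, hw⟩ ↦ ?_
  obtain ⟨t, rfl⟩ : ∃ t, l = b :: t := by
    cases l with
    | nil => simp at hb
    | cons b' t => exact ⟨t, by rw [Option.some.inj hb]⟩
  rw [← chainCost_cons_cons]
  exact G.edist_le_chainCost _ rfl (by rwa [List.getLast?_cons_cons])

lemma lenFn_le_elen {a b : G.V} {e : G.E} (h : G.ends e = (a, b) ∨ G.ends e = (b, a)) :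
    G.lenFn a b ≤ G.elen e :=
  iInf_le (fun e : {e : G.E // G.ends e = (a, b) ∨ G.ends e = (b, a)} ↦ G.elen e.1) ⟨e, h⟩

lemma edist_le_elen {a b : G.V} {e : G.E} (h : G.ends e = (a, b) ∨ G.ends e = (b, a)) :
    G.edist a b ≤ G.elen e :=
  calc G.edist a b ≤ G.lenFn a b + G.edist b b := G.edist_le_lenFn_add a b b
    _ = G.lenFn a b := by rw [edist_self, add_zero]
    _ ≤ G.elen e := G.lenFn_le_elen h

lemma le_add_mul_edist (f : G.V → ℝ≥0∞) {c : ℝ≥0∞} (hc₀ : c ≠ 0) (hc : c ≠ ⊤)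
    (hf : ∀ e, f (G.ends e).2 ≤ f (G.ends e).1 + c * G.elen e ∧
      f (G.ends e).1 ≤ f (G.ends e).2 + c * G.elen e)
    (u v : G.V) : f v ≤ f u + c * G.edist u v := by
  have hstep : ∀ a b, f b ≤ f a + c * G.lenFn a b := by
    intro a b
    rw [lenFn, ENNReal.mul_iInf_of_ne hc₀ hc, ENNReal.add_iInf]
    refine le_iInf fun ⟨e, he⟩ ↦ ?_
    rcases he with he | he
    · simpa [he] using (hf e).1
    · simpa [he] using (hf e).2
  rw [edist, ENNReal.mul_iInf_of_ne hc₀ hc, ENNReal.add_iInf]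
  exact le_iInf fun l ↦ le_add_mul_chainCost G.lenFn f c hstep l.1 u v l.2.1 l.2.2

lemma le_add_edist (f : G.V → ℝ≥0∞)
    (hf : ∀ e, f (G.ends e).2 ≤ f (G.ends e).1 + G.elen e ∧
      f (G.ends e).1 ≤ f (G.ends e).2 + G.elen e)
    (u v : G.V) : f v ≤ f u + G.edist u v := by
  simpa using G.le_add_mul_edist f one_ne_zero ENNReal.one_ne_top (by simpa using hf) u v

lemma edist_ends_le (e : G.E) (w : G.V) :
    G.edist (G.ends e).2 w ≤ G.edist (G.ends e).1 w + G.elen e ∧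
      G.edist (G.ends e).1 w ≤ G.edist (G.ends e).2 w + G.elen e := by
  constructor
  · refine (G.edist_le_lenFn_add _ (G.ends e).1 w).trans_eq (add_comm _ _) |>.trans ?_
    gcongr
    exact G.lenFn_le_elen (Or.inr rfl)
  · refine (G.edist_le_lenFn_add _ (G.ends e).2 w).trans_eq (add_comm _ _) |>.trans ?_
    gcongr
    exact G.lenFn_le_elen (Or.inl rfl)

lemma edist_comm (u v : G.V) : G.edist u v = G.edist v u := by
  have key : ∀ u v, G.edist v u ≤ G.edist u v := fun u v ↦ by
    simpa using G.le_add_edist (G.edist · u) (G.edist_ends_le · u) u v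
  exact le_antisymm (key v u) (key u v)

lemma edist_triangle (u v w : G.V) : G.edist u w ≤ G.edist u v + G.edist v w := by
  simpa [G.edist_comm v u, add_comm] using G.le_add_edist (G.edist · w) (G.edist_ends_le · w) v u

lemma edist_le_edist_add_of_edist_le (x : G.V) {a b : G.V} {r : ℝ≥0∞}
    (h : G.edist a b ≤ r) :
    G.edist x b ≤ G.edist x a + r ∧ G.edist x a ≤ G.edist x b + r :=
  ⟨(G.edist_triangle x a b).trans (by gcongr),
    (G.edist_triangle x b a).trans (by rw [G.edist_comm] at h; gcongr)⟩

lemma edist_ne_zero (hpos : ∀ e, 0 < G.elen e) {u v : G.V} (huv : u ≠ v) :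
    G.edist u v ≠ 0 := by
  classical
  set ε := Finset.univ.inf G.elen
  have hε : 0 < ε := (Finset.lt_inf_iff ENNReal.zero_lt_top).2 fun e _ ↦ hpos e
  have hf : ∀ a b e, (if b = u then 0 else ε) ≤ (if a = u then 0 else ε) + G.elen e := by
    intro a b e
    have : ε ≤ G.elen e := Finset.inf_le (Finset.mem_univ e)
    split_ifs <;> simp [this]
  have := G.le_add_edist (fun x ↦ if x = u then 0 else ε) (fun e ↦ ⟨hf _ _ e, hf _ _ e⟩)
    u v
  simp only [huv.symm, if_true, if_false, zero_add] at this
  exact (hε.trans_le this).ne'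

lemma len_ne_zero (hG : G.Proper) : G.len ≠ 0 :=
  G.edist_ne_zero (fun e ↦ (hG.1 e).1) hG.2.2.2

end Distance

section Oslash

variable (H G : STGraph)

lemma endMap_s (e : H.E) : endMap H G e G.s = Sum.inl (H.ends e).1 := by
  simp [endMap]

lemma endMap_t (hG : G.s ≠ G.t) (e : H.E) : endMap H G e G.t = Sum.inl (H.ends e).2 := by
  simp [endMap, hG.symm]

lemma oslash_elen (e : H.E) (g : G.E) :
    (oslash H G).elen (e, g) = H.elen e / G.len * G.elen g :=
  ENNReal.mul_div_right_comm

lemma oslash_edist_endMap_le (e : H.E) (g : G.E) :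
    (oslash H G).edist (endMap H G e (G.ends g).1) (endMap H G e (G.ends g).2) ≤
      H.elen e / G.len * G.elen g :=
  ((oslash H G).edist_le_elen (e := (e, g)) (Or.inl rfl)).trans_eq (oslash_elen H G e g)

lemma oslash_edist_le_elen (hH : H.Proper) (hG : G.Proper) (e : H.E) :
    (oslash H G).edist (Sum.inl (H.ends e).1) (Sum.inl (H.ends e).2) ≤ H.elen e := by
  have hc₀ : H.elen e / G.len ≠ 0 := ENNReal.div_ne_zero.2 ⟨(hH.1 e).1.ne', hG.2.2.1 _ _⟩
  have hc : H.elen e / G.len ≠ ⊤ := ENNReal.div_ne_top (hH.1 e).2.ne (G.len_ne_zero hG)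
  have := G.le_add_mul_edist
    (fun w ↦ (oslash H G).edist (Sum.inl (H.ends e).1) (endMap H G e w)) hc₀ hc
    (fun g ↦ (oslash H G).edist_le_edist_add_of_edist_le _ (oslash_edist_endMap_le H G e g))
    G.s G.t
  simp only [endMap_s, endMap_t H G hG.2.2.2] at this
  rw [(oslash H G).edist_self (Sum.inl (H.ends e).1), zero_add] at this
  exact this.trans_eq (ENNReal.div_mul_cancel (G.len_ne_zero hG) (hG.2.2.1 _ _))

lemma oslash_edist_inl_le (hH : H.Proper) (hG : G.Proper) (u v : H.V) :
    (oslash H G).edist (Sum.inl u) (Sum.inl v) ≤ H.edist u v := by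
  have := H.le_add_edist (fun a ↦ (oslash H G).edist (Sum.inl u) (Sum.inl a))
    (fun e ↦ (oslash H G).edist_le_edist_add_of_edist_le _ (oslash_edist_le_elen H G hH hG e)) u v
  rwa [(oslash H G).edist_self (Sum.inl u), zero_add] at this

/-- The distance from `u` to the vertex `w` of the copy of `G` along `e`, as seen by a path that
enters this copy through `s(G)` or through `t(G)`. -/
noncomputable def copyPot (u : H.V) (e : H.E) (w : G.V) : ℝ≥0∞ :=
  min (H.edist u (H.ends e).1 + H.elen e / G.len * G.edist G.s w)
    (H.edist u (H.ends e).2 + H.elen e / G.len * G.edist w G.t)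

noncomputable def oslashPot (u : H.V) : (oslash H G).V → ℝ≥0∞
  | Sum.inl a => H.edist u a
  | Sum.inr (e, w) => copyPot H G u e w.1

lemma copyPot_le_add (u : H.V) (e : H.E) (w₁ w₂ : G.V) :
    copyPot H G u e w₂ ≤ copyPot H G u e w₁ + H.elen e / G.len * G.edist w₁ w₂ := by
  rw [copyPot, copyPot, ← min_add_add_right]
  gcongr ?_ ⊓ ?_
  · rw [add_assoc, ← mul_add]
    gcongr
    exact G.edist_triangle _ _ _
  · rw [add_assoc, ← mul_add]
    gcongr
    rw [G.edist_comm w₁ w₂, add_comm]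
    exact G.edist_triangle _ _ _

lemma oslashPot_endMap (hG : G.Proper) (u : H.V) (e : H.E) (w : G.V) :
    oslashPot H G u (endMap H G e w) = copyPot H G u e w := by
  have hlen : H.elen e / G.len * G.len = H.elen e :=
    ENNReal.div_mul_cancel (G.len_ne_zero hG) (hG.2.2.1 _ _)
  by_cases hs : w = G.s
  · subst hs
    rw [endMap_s, copyPot, G.edist_self, ← len, mul_zero, add_zero, hlen]
    refine (min_eq_left ?_).symm
    exact (H.edist_triangle _ _ _).trans (by gcongr; exact H.edist_le_elen (Or.inr rfl))
  by_cases ht : w = G.t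
  · subst ht
    rw [endMap_t H G hG.2.2.2, copyPot, G.edist_self, ← len, mul_zero, add_zero, hlen]
    refine (min_eq_right ?_).symm
    exact (H.edist_triangle _ _ _).trans (by gcongr; exact H.edist_le_elen (Or.inl rfl))
  simp [endMap, hs, ht, oslashPot]

lemma edist_le_oslash_edist_inl (hG : G.Proper) (u v : H.V) :
    H.edist u v ≤ (oslash H G).edist (Sum.inl u) (Sum.inl v) := by
  have := (oslash H G).le_add_edist (oslashPot H G u) (fun ⟨e, g⟩ ↦ by
    simp only [oslash, oslashPot_endMap H G hG, ENNReal.mul_div_right_comm]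
    exact ⟨(copyPot_le_add H G u e _ _).trans (by gcongr; exact G.edist_le_elen (Or.inl rfl)),
      (copyPot_le_add H G u e _ _).trans (by gcongr; exact G.edist_le_elen (Or.inr rfl))⟩)
    (Sum.inl u) (Sum.inl v)
  simpa [oslashPot] using this

end Oslash

end STGraph

open STGraph in
/-- The vertex set `V(H) ⊆ V(H ⊘ G)` forms an isometric copy of `H`: for all `u, v ∈ V(H)`,
`d_{H⊘G}(u, v) = d_H(u, v)`. -/
theorem oslash_isometric_copy (H G : STGraph) (hH : H.Proper) (hG : G.Proper)
    (u v : H.V) :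
    (oslash H G).edist (Sum.inl u) (Sum.inl v) = H.edist u v :=
  (oslash_edist_inl_le H G hH hG u v).antisymm (edist_le_oslash_edist_inl H G hG u v)
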